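/- arXiv:0801.3184 — 2 statements merged into one kernel-verified Lean document; each statement's English description precedes it below -/
import Mathlib

section
/- Let p ∈ (0,1] and k a positive integer. Then ∑_{r=0}^{kn-1} p (1-p)^r * (∑_{i=r+1}^{kn} 1/i) − (∑_{i=1}^{kn} 1/i + log p) tends to 0 as n → ∞. -/
/-!
Exchanging the order of summation turns the double sum into `∑_{i ≤ N} (1 - (1 - p)^i) / i`,
since the inner weights `p (1 - p)^r`, `r < i`, sum to `1 - (1 - p)^i`. The difference with the
harmonic sum is then `-∑_{i ≤ N} (1 - p)^i / i`, a partial sum of the series of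
`log (1 - (1 - p)) = log p`.
-/

open Finset Filter Topology

theorem sum_range_mul_sum_Icc_eq_sum_Icc {R : Type*} [CommSemiring R] (a b : ℕ → R) (N : ℕ) :
    ∑ r ∈ range N, a r * ∑ i ∈ Icc (r + 1) N, b i =
      ∑ i ∈ Icc 1 N, (∑ r ∈ range i, a r) * b i := by
  simp_rw [mul_sum, sum_mul]
  refine sum_comm' fun r i => ?_
  simp only [mem_range, mem_Icc]
  omega

theorem sum_range_mul_one_sub_pow {R : Type*} [CommRing R] (q : R) (i : ℕ) :
    ∑ r ∈ range i, (1 - q) * q ^ r = 1 - q ^ i := by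
  rw [← mul_sum, mul_neg_geom_sum]

theorem tendsto_sum_Icc_pow_div {q : ℝ} (hq : |q| < 1) :
    Tendsto (fun N : ℕ => ∑ i ∈ Icc 1 N, q ^ i / i) atTop (𝓝 (-Real.log (1 - q))) := by
  refine (Real.hasSum_pow_div_log_of_abs_lt_one hq).tendsto_sum_nat.congr fun N => ?_
  rw [← Finset.Ico_add_one_right_eq_Icc, sum_Ico_eq_sum_range, Nat.add_sub_cancel]
  refine sum_congr rfl fun i _ => ?_
  push_cast
  ring_nf

theorem expected_duration_asymptotic (p : ℝ) (hp0 : 0 < p) (hp1 : p ≤ 1) (k : ℕ) (hk : 0 < k) :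
    Filter.Tendsto
      (fun n : ℕ =>
        (∑ r ∈ Finset.range (k * n),
          p * (1 - p) ^ r * ∑ i ∈ Finset.Icc (r + 1) (k * n), (1 : ℝ) / i) -
        ((∑ i ∈ Finset.Icc 1 (k * n), (1 : ℝ) / i) + Real.log p))
      Filter.atTop (nhds 0) := by
  have hq : |1 - p| < 1 := by rw [abs_lt]; constructor <;> linarith
  have hkn : Tendsto (fun n : ℕ => k * n) atTop atTop :=
    tendsto_id.const_mul_atTop' hk
  have hlim := ((tendsto_sum_Icc_pow_div hq).comp hkn).neg.sub_const (Real.log p)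
  rw [sub_sub_cancel, neg_neg, sub_self] at hlim
  refine hlim.congr fun n => ?_
  have hweights (i : ℕ) : ∑ r ∈ range i, p * (1 - p) ^ r = 1 - (1 - p) ^ i := by
    simpa using sum_range_mul_one_sub_pow (1 - p) i
  rw [Function.comp_apply, sum_range_mul_sum_Icc_eq_sum_Icc]
  simp only [hweights, sub_mul, one_mul, sum_sub_distrib, div_eq_mul_inv]
  ring
end

section
/- Define functions F_n : [0,∞) → ℝ by F_0(t) = F_1(t) = 1 and F_n(t) = ∫_0^t ∑_{r=1}^{n-1} F_r(t-s) F_{n-1-r}(t-s) e^{-(n-1)s} ds for n ≥ 2. Then for all n and t, 0 ≤ F_n(t) ≤ 1, and F_n is monotone nondecreasing in t. -/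
/-!
Write `F_n(t) = ∫₀ᵗ k_n(t - s) e^{-(n-1)s} ds` with `k_n = ∑_{r=1}^{n-1} F_r F_{n-1-r}` and
induct on `n`. If every `F_r` with `r < n` is nondecreasing with values in `[0, 1]` on `[0, ∞)`,
then `k_n` is nondecreasing with `0 ≤ k_n ≤ n - 1`. Hence
`0 ≤ F_n(t) ≤ ∫₀ᵗ (n-1) e^{-(n-1)s} ds = 1 - e^{-(n-1)t}`, and `F_n` is nondecreasing because
enlarging `t` both lengthens the range of integration and increases the integrand `k_n(t - s)`.
Integrability comes for free: `s ↦ k_n(t - s)` is monotone on `[0, t]`.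
-/

open Real Set Finset intervalIntegral MeasureTheory

structure IsUnitMonotone (f : ℝ → ℝ) : Prop where
  nonneg : ∀ t, 0 ≤ t → 0 ≤ f t
  le_one : ∀ t, 0 ≤ t → f t ≤ 1
  monotoneOn : MonotoneOn f (Ici 0)

namespace IsUnitMonotone

variable {f g : ℝ → ℝ}

lemma congr (hf : IsUnitMonotone f) (h : EqOn f g (Ici 0)) : IsUnitMonotone g where
  nonneg t ht := h ht ▸ hf.nonneg t ht
  le_one t ht := h ht ▸ hf.le_one t ht
  monotoneOn := hf.monotoneOn.congr h

lemma one : IsUnitMonotone fun _ => 1 :=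
  ⟨fun _ _ => zero_le_one, fun _ _ => le_rfl, monotoneOn_const⟩

lemma mul (hf : IsUnitMonotone f) (hg : IsUnitMonotone g) : IsUnitMonotone (f * g) where
  nonneg t ht := mul_nonneg (hf.nonneg t ht) (hg.nonneg t ht)
  le_one t ht := mul_le_one₀ (hf.le_one t ht) (hg.nonneg t ht) (hg.le_one t ht)
  monotoneOn a ha b hb hab := mul_le_mul (hf.monotoneOn ha hb hab) (hg.monotoneOn ha hb hab)
    (hg.nonneg a ha) (hf.nonneg b hb)

end IsUnitMonotone

noncomputable def expConv (k : ℝ → ℝ) (c t : ℝ) : ℝ :=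
  ∫ s in 0..t, k (t - s) * exp (-c * s)

lemma integral_mul_exp_neg_mul (c t : ℝ) :
    ∫ s in 0..t, c * exp (-c * s) = 1 - exp (-c * t) := by
  have hderiv : ∀ s, HasDerivAt (fun s => -exp (-c * s)) (c * exp (-c * s)) s := fun s =>
    ((hasDerivAt_id' s).const_mul (-c)).exp.neg.congr_deriv (by ring)
  rw [integral_eq_sub_of_hasDerivAt (fun s _ => hderiv s)
    ((by fun_prop : Continuous _).intervalIntegrable _ _)]
  simp only [mul_zero, exp_zero]
  ring

section ExpConv

variable {k : ℝ → ℝ} {c : ℝ}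

lemma intervalIntegrable_comp_sub_mul_exp (hk : MonotoneOn k (Ici 0)) {a t : ℝ} (ha : 0 ≤ a)
    (hat : a ≤ t) : IntervalIntegrable (fun s => k (t - s) * exp (-c * s)) volume 0 a := by
  have hanti : AntitoneOn (fun s => k (t - s)) (uIcc 0 a) := by
    rw [uIcc_of_le ha]
    intro x hx y hy hxy
    exact hk (show 0 ≤ t - y by linarith [hy.2]) (show 0 ≤ t - x by linarith [hx.2])
      (by linarith)
  exact hanti.intervalIntegrable.mul_continuousOn (by fun_prop)

lemma expConv_nonneg (hk0 : ∀ u, 0 ≤ u → 0 ≤ k u) {t : ℝ} (ht : 0 ≤ t) :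
    0 ≤ expConv k c t :=
  integral_nonneg ht fun s hs => mul_nonneg (hk0 _ (by linarith [hs.2])) (exp_nonneg _)

lemma expConv_le_one (hk : MonotoneOn k (Ici 0)) (hkc : ∀ u, 0 ≤ u → k u ≤ c) {t : ℝ}
    (ht : 0 ≤ t) : expConv k c t ≤ 1 :=
  calc expConv k c t ≤ ∫ s in 0..t, c * exp (-c * s) :=
        integral_mono_on ht (intervalIntegrable_comp_sub_mul_exp hk ht le_rfl)
          ((by fun_prop : Continuous _).intervalIntegrable _ _)
          fun s hs => mul_le_mul_of_nonneg_right (hkc _ (by linarith [hs.2])) (exp_nonneg _)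
    _ = 1 - exp (-c * t) := integral_mul_exp_neg_mul c t
    _ ≤ 1 := sub_le_self _ (exp_nonneg _)

lemma monotoneOn_expConv (hk : MonotoneOn k (Ici 0)) (hk0 : ∀ u, 0 ≤ u → 0 ≤ k u) :
    MonotoneOn (expConv k c) (Ici 0) := by
  intro a (ha : 0 ≤ a) b (hb : 0 ≤ b) hab
  have htail : 0 ≤ ∫ s in a..b, k (b - s) * exp (-c * s) :=
    integral_nonneg hab fun s hs => mul_nonneg (hk0 _ (by linarith [hs.2])) (exp_nonneg _)
  have hsplit := integral_interval_sub_left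
    (intervalIntegrable_comp_sub_mul_exp (c := c) hk hb le_rfl)
    (intervalIntegrable_comp_sub_mul_exp hk ha hab)
  have hhead : expConv k c a ≤ ∫ s in 0..a, k (b - s) * exp (-c * s) :=
    integral_mono_on ha (intervalIntegrable_comp_sub_mul_exp hk ha le_rfl)
      (intervalIntegrable_comp_sub_mul_exp hk ha hab) fun s hs =>
        mul_le_mul_of_nonneg_right
          (hk (show 0 ≤ a - s by linarith [hs.2]) (show 0 ≤ b - s by linarith [hs.2])
            (by linarith))
          (exp_nonneg _)
  unfold expConv at hhead ⊢
  linarith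

lemma isUnitMonotone_expConv (hk : MonotoneOn k (Ici 0)) (hk0 : ∀ u, 0 ≤ u → 0 ≤ k u)
    (hkc : ∀ u, 0 ≤ u → k u ≤ c) : IsUnitMonotone (expConv k c) :=
  ⟨fun _ => expConv_nonneg hk0, fun _ => expConv_le_one hk hkc, monotoneOn_expConv hk hk0⟩

end ExpConv

lemma isUnitMonotone_expConv_sum {ι : Type*} {s : Finset ι} {f : ι → ℝ → ℝ}
    (hf : ∀ i ∈ s, IsUnitMonotone (f i)) :
    IsUnitMonotone (expConv (fun u => ∑ i ∈ s, f i u) #s) := by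
  refine isUnitMonotone_expConv (fun a ha b hb hab => sum_le_sum fun i hi => ?_)
    (fun u hu => sum_nonneg fun i hi => (hf i hi).nonneg u hu) (fun u hu => ?_)
  · exact (hf i hi).monotoneOn ha hb hab
  · simpa using sum_le_card_nsmul s (f · u) 1 fun i hi => (hf i hi).le_one u hu

lemma eqOn_expConv_of_recursion (F : ℕ → ℝ → ℝ)
    (hrec : ∀ n, 2 ≤ n → ∀ t, 0 ≤ t →
      F n t = ∫ s in (0 : ℝ)..t,
        ∑ r ∈ Finset.Icc 1 (n - 1),
          F r (t - s) * F (n - 1 - r) (t - s) * Real.exp (-((n : ℝ) - 1) * s)) (m : ℕ) :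
    EqOn (F (m + 2))
      (expConv (fun u => ∑ r ∈ Icc 1 (m + 1), F r u * F (m + 1 - r) u) #(Icc 1 (m + 1)))
      (Ici 0) := by
  intro t ht
  have hc : ((m + 2 : ℕ) : ℝ) - 1 = #(Icc 1 (m + 1)) := by
    simp only [Nat.card_Icc, Nat.add_sub_cancel, Nat.cast_add, Nat.cast_ofNat, Nat.cast_one]
    ring
  rw [hrec (m + 2) (by omega) t ht, expConv, hc]
  simp only [sum_mul]
  rfl

theorem annihilation_cdf_bounds_monotone (F : ℕ → ℝ → ℝ)
    (h0 : ∀ t, 0 ≤ t → F 0 t = 1) (h1 : ∀ t, 0 ≤ t → F 1 t = 1)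
    (hrec : ∀ n, 2 ≤ n → ∀ t, 0 ≤ t →
      F n t = ∫ s in (0 : ℝ)..t,
        ∑ r ∈ Finset.Icc 1 (n - 1),
          F r (t - s) * F (n - 1 - r) (t - s) * Real.exp (-((n : ℝ) - 1) * s)) :
    (∀ n, ∀ t, 0 ≤ t → 0 ≤ F n t ∧ F n t ≤ 1) ∧
    (∀ n, ∀ s t, 0 ≤ s → s ≤ t → F n s ≤ F n t) := by
  have hF : ∀ n, IsUnitMonotone (F n) := by
    intro n
    induction n using Nat.strong_induction_on with
    | _ n ih =>
      match n with
      | 0 => exact IsUnitMonotone.one.congr fun t ht => (h0 t ht).symm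
      | 1 => exact IsUnitMonotone.one.congr fun t ht => (h1 t ht).symm
      | m + 2 =>
        refine (isUnitMonotone_expConv_sum fun r hr => ?_).congr
          (eqOn_expConv_of_recursion F hrec m).symm
        have hr_bounds := mem_Icc.mp hr
        exact (ih r (by omega)).mul (ih (m + 1 - r) (by omega))
  exact ⟨fun n t ht => ⟨(hF n).nonneg t ht, (hF n).le_one t ht⟩,
    fun n s t hs hst => (hF n).monotoneOn hs (hs.trans hst) hst⟩
end
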